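/- arXiv:2104.07156 — 3 statements merged into one kernel-verified Lean document; each statement's English description precedes it below -/
import Mathlib

section
/- Let k be a field of characteristic zero. If f ∈ k[τ][[y₁,…,y_r,z]] is a formal power series in variables y = (y₁,…,y_r) and z with polynomial coefficients in indeterminates τ = (τ₁,…,τ_s), written f = Σ_n c_n(y) zⁿ, and there exists d ≥ 1 with c_i(0) = 0 for i < d and c_d(0) = 1, then there exist a unit u ∈ k[τ][[y,z]] and coefficients a₁,…,a_d ∈ k[τ][[y]] with a_i(0) = 0 such that f = u · (z^d + Σ_{i=1}^d a_i(y) z^{d-i}). In particular the Weierstrass polynomial of f has coefficients again in k[τ][[y]]. -/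
/-!
The ring `A = R[[y₁,…,y_r]]` is complete for the `(y)`-adic topology, and the hypotheses say
that `f` reduced modulo `(y)` has order `d` in `z` with a unit as its `z^d`-coefficient. Over any
`I`-adically complete ring this is enough for Weierstrass division: `z^d = f q + ρ` with `ρ` a
polynomial of degree `< d`. Reducing modulo `I` shows that `ρ` has all coefficients in `I` and
that `q` is a unit, so `f = q⁻¹ (z^d - ρ)` with `z^d - ρ` a distinguished polynomial over `A`
itself.
-/

namespace PowerSeries

variable {A : Type*} [CommRing A] {I : Ideal A} [IsAdicComplete I A]

theorem IsWeierstrassDivisionAt.isUnit_of_X_pow {g q : A⟦X⟧} {r : Polynomial A}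
    (H : (X ^ (g.map (Ideal.Quotient.mk I)).order.toNat).IsWeierstrassDivisionAt g q r I) :
    IsUnit q := by
  set n := (g.map (Ideal.Quotient.mk I)).order.toNat
  have hr : ∀ i, Polynomial.coeff r i ∈ I := by
    intro i
    rcases lt_or_ge i n with hi | hi
    · have := H.coeff_f_sub_r_mem hi
      rwa [map_sub, coeff_X_pow, if_neg hi.ne, zero_sub, neg_mem_iff, Polynomial.coeff_coe] at this
    · rw [Polynomial.coeff_eq_zero_of_degree_lt (H.degree_lt.trans_le (by exact_mod_cast hi))]
      exact I.zero_mem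
  have hr0 : (r : A⟦X⟧).map (Ideal.Quotient.mk I) = 0 := by
    ext i
    simpa [Polynomial.coeff_coe, Ideal.Quotient.eq_zero_iff_mem] using hr i
  -- Modulo `I` the remainder vanishes and `g ≡ X ^ n * g'`, so `X ^ n ≡ X ^ n * g' * q` makes
  -- `q` a unit modulo `I`; units lift because `I` lies in the Jacobson radical.
  obtain ⟨g', hg'⟩ := X_pow_order_dvd (φ := g.map (Ideal.Quotient.mk I))
  have hmul : g' * q.map (Ideal.Quotient.mk I) = 1 := by
    have := congrArg (map (Ideal.Quotient.mk I)) H.eq_mul_add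
    rw [map_add, map_mul, hr0, add_zero, hg', map_pow, map_X, mul_assoc] at this
    exact X_pow_mul_cancel (by rw [← this, mul_one])
  have := isLocalHom_of_le_jacobson_bot I (IsAdicComplete.le_jacobson_bot I)
  rw [isUnit_iff_constantCoeff]
  have hq := (IsUnit.of_mul_eq_one_right _ hmul).map constantCoeff
  rw [← coeff_zero_eq_constantCoeff_apply, coeff_map, coeff_zero_eq_constantCoeff_apply] at hq
  exact hq.of_map

theorem IsWeierstrassDivisorAt.exists_isWeierstrassFactorizationAt {g : A⟦X⟧}
    (H : g.IsWeierstrassDivisorAt I) :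
    ∃ f h, g.IsWeierstrassFactorizationAt f h I := by
  rcases eq_or_ne I ⊤ with rfl | hI
  · have := ‹IsAdicComplete ⊤ A›.toIsHausdorff.subsingleton
    exact ⟨1, 1, ⟨⟨fun _ => Submodule.mem_top⟩, Subsingleton.elim _ _⟩, isUnit_one,
      Subsingleton.elim _ _⟩
  have := Ideal.Quotient.nontrivial_iff.mpr hI
  have : Nontrivial A := (Ideal.Quotient.mk_surjective (I := I)).nontrivial
  set n := (g.map (Ideal.Quotient.mk I)).order.toNat
  have hdiv := H.isWeierstrassDivisionAt_div_mod (X ^ n)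
  set r := H.mod (X ^ n)
  have hr : r.degree < (Polynomial.X ^ n : Polynomial A).degree := by
    simpa using hdiv.degree_lt
  have hnat : (Polynomial.X ^ n - r).natDegree = n := by
    rw [Polynomial.natDegree_eq_of_degree_eq (Polynomial.degree_sub_eq_left_of_degree_lt hr),
      Polynomial.natDegree_X_pow]
  have hq := hdiv.isUnit_of_X_pow
  refine ⟨Polynomial.X ^ n - r, ↑hq.unit⁻¹,
    ⟨⟨fun {i} hi => ?_⟩, .sub_of_left (Polynomial.monic_X_pow n) hr⟩, Units.isUnit _, ?_⟩
  · rw [hnat] at hi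
    simpa [Polynomial.coeff_coe] using hdiv.coeff_f_sub_r_mem hi
  · rw [Polynomial.coe_sub, Polynomial.coe_pow, Polynomial.coe_X,
      ← eq_sub_of_add_eq hdiv.eq_mul_add.symm, mul_assoc, IsUnit.mul_val_inv, mul_one]

end PowerSeries

namespace MvPowerSeries

variable {σ R : Type*} [CommRing R]

theorem span_range_X_le_ker_constantCoeff :
    Ideal.span (Set.range X) ≤ RingHom.ker (constantCoeff : MvPowerSeries σ R →+* R) := by
  rw [Ideal.span_le]
  rintro _ ⟨i, rfl⟩
  simp

theorem span_range_X_ne_top [Nontrivial R] :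
    Ideal.span (Set.range X) ≠ (⊤ : Ideal (MvPowerSeries σ R)) := fun h => by
  simpa using
    span_range_X_le_ker_constantCoeff (h ▸ Submodule.mem_top : (1 : MvPowerSeries σ R) ∈ _)

theorem mem_span_range_X_iff [Finite σ] {a : MvPowerSeries σ R} :
    a ∈ Ideal.span (Set.range X) ↔ constantCoeff a = 0 := by
  refine ⟨fun ha => span_range_X_le_ker_constantCoeff ha, fun ha => ?_⟩
  classical
  have := Fintype.ofFinite σ
  -- Each nonzero monomial is assigned one variable dividing it; `b i` collects the monomials
  -- assigned to `i`, divided by `X i`.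
  choose ι hι using fun m : {m : σ →₀ ℕ // m ≠ 0} => Finsupp.ne_iff.mp m.2
  let b : σ → MvPowerSeries σ R := fun i m =>
    if ι ⟨m + Finsupp.single i 1, by simp⟩ = i then coeff (m + Finsupp.single i 1) a else 0
  suffices a = ∑ i, X i * b i by
    rw [this]
    exact Ideal.sum_mem _ fun i _ => Ideal.mul_mem_right _ _ (Ideal.subset_span ⟨i, rfl⟩)
  ext m
  simp only [map_sum, X, coeff_monomial_mul, one_mul]
  rcases eq_or_ne m 0 with rfl | hm
  · simp [ha]
  have hterm (i : σ) (hi : Finsupp.single i 1 ≤ m) :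
      coeff (m - Finsupp.single i 1) (b i) = if ι ⟨m, hm⟩ = i then coeff m a else 0 := by
    obtain ⟨m', rfl⟩ := exists_add_of_le hi
    rw [add_tsub_cancel_left, coeff_apply]
    simp only [b, add_comm m', coeff_apply]
  rw [Finset.sum_eq_single (ι ⟨m, hm⟩)]
  · have hle : Finsupp.single (ι ⟨m, hm⟩) 1 ≤ m := by
      simpa [Finsupp.single_le_iff, Nat.one_le_iff_ne_zero] using hι ⟨m, hm⟩
    rw [if_pos hle, hterm _ hle, if_pos rfl]
  · intro i _ hi
    split_ifs with hle
    · rw [hterm i hle, if_neg (Ne.symm hi)]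
    · rfl
  · simp

theorem order_map_mk_span_range_X [Finite σ] {f : PowerSeries (MvPowerSeries σ R)} {d : ℕ}
    (hlow : ∀ i < d, constantCoeff (PowerSeries.coeff i f) = 0)
    (hd : constantCoeff (PowerSeries.coeff d f) ≠ 0) :
    (f.map (Ideal.Quotient.mk (Ideal.span (Set.range X)))).order = d := by
  simp only [PowerSeries.order_eq_nat, PowerSeries.coeff_map, ne_eq,
    Ideal.Quotient.eq_zero_iff_mem, mem_span_range_X_iff]
  exact ⟨hd, hlow⟩

end MvPowerSeries

theorem Polynomial.Monic.coe_eq_X_pow_add_sum {A : Type*} [CommRing A] {p : Polynomial A}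
    (hp : p.Monic) {d : ℕ} (hd : p.natDegree = d) :
    (p : PowerSeries A) = PowerSeries.X ^ d +
      ∑ i : Fin d, PowerSeries.C (p.coeff (d - 1 - i)) * PowerSeries.X ^ (d - 1 - (i : ℕ)) := by
  subst hd
  conv_lhs => rw [hp.as_sum, ← coeToPowerSeries.ringHom_apply]
  rw [Fin.sum_univ_eq_sum_range (fun i =>
      PowerSeries.C (p.coeff (p.natDegree - 1 - i)) * PowerSeries.X ^ (p.natDegree - 1 - i)),
    Finset.sum_range_reflect (fun i => PowerSeries.C (p.coeff i) * PowerSeries.X ^ i)]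
  simp only [map_add, map_sum, map_mul, map_pow, coeToPowerSeries.ringHom_apply, coe_C, coe_X]

theorem weierstrass_preparation_polynomial_coefficients_general
    {k : Type*} [Field k] (r s d : ℕ)
    (f : PowerSeries (MvPowerSeries (Fin r) (MvPolynomial (Fin s) k)))
    (hlow : ∀ i < d, MvPowerSeries.constantCoeff (σ := Fin r) (R := MvPolynomial (Fin s) k)
      (PowerSeries.coeff i f) = 0)
    (hd1 : MvPowerSeries.constantCoeff (σ := Fin r) (R := MvPolynomial (Fin s) k)
      (PowerSeries.coeff d f) = 1) :
    ∃ (u : (PowerSeries (MvPowerSeries (Fin r) (MvPolynomial (Fin s) k)))ˣ)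
      (a : Fin d → MvPowerSeries (Fin r) (MvPolynomial (Fin s) k)),
      (∀ i, MvPowerSeries.constantCoeff (σ := Fin r) (R := MvPolynomial (Fin s) k) (a i) = 0) ∧
      f = (u : PowerSeries (MvPowerSeries (Fin r) (MvPolynomial (Fin s) k))) *
        (PowerSeries.X ^ d +
          ∑ i : Fin d, PowerSeries.C (a i) * PowerSeries.X ^ (d - 1 - (i : ℕ))) := by
  have horder := MvPowerSeries.order_map_mk_span_range_X hlow (by rw [hd1]; exact one_ne_zero)
  have H : f.IsWeierstrassDivisorAt (Ideal.span (Set.range MvPowerSeries.X)) := by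
    rw [PowerSeries.IsWeierstrassDivisorAt, horder, ENat.toNat_natCast,
      MvPowerSeries.isUnit_iff_constantCoeff, hd1]
    exact isUnit_one
  obtain ⟨p, _, hfac⟩ := H.exists_isWeierstrassFactorizationAt
  have hdeg : p.natDegree = d := by
    rw [hfac.natDegree_eq_toNat_order_map_of_ne_top MvPowerSeries.span_range_X_ne_top, horder,
      ENat.toNat_natCast]
  refine ⟨hfac.isUnit.unit, fun i => p.coeff (d - 1 - i),
    fun i => MvPowerSeries.mem_span_range_X_iff.mp (hfac.isDistinguishedAt.mem (by omega)), ?_⟩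
  rw [IsUnit.unit_spec, ← hfac.isDistinguishedAt.monic.coe_eq_X_pow_add_sum hdeg, mul_comm]
  exact hfac.eq_mul

/-- Weierstrass preparation in `k[τ][[y,z]]` (coefficients polynomial in the
parameters τ are preserved).  We model `k[τ][[y,z]]` as
`PowerSeries (MvPowerSeries (Fin r) (MvPolynomial (Fin s) k))`, with `z` the outer
(power series) variable and `y₁,…,y_r` the inner variables. -/
theorem weierstrass_preparation_polynomial_coefficients
    {k : Type*} [Field k] [CharZero k] (r s d : ℕ) (hd : 1 ≤ d)
    (f : PowerSeries (MvPowerSeries (Fin r) (MvPolynomial (Fin s) k)))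
    (hlow : ∀ i < d, MvPowerSeries.constantCoeff (σ := Fin r) (R := MvPolynomial (Fin s) k)
      (PowerSeries.coeff i f) = 0)
    (hd1 : MvPowerSeries.constantCoeff (σ := Fin r) (R := MvPolynomial (Fin s) k)
      (PowerSeries.coeff d f) = 1) :
    ∃ (u : (PowerSeries (MvPowerSeries (Fin r) (MvPolynomial (Fin s) k)))ˣ)
      (a : Fin d → MvPowerSeries (Fin r) (MvPolynomial (Fin s) k)),
      (∀ i, MvPowerSeries.constantCoeff (σ := Fin r) (R := MvPolynomial (Fin s) k) (a i) = 0) ∧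
      f = (u : PowerSeries (MvPowerSeries (Fin r) (MvPolynomial (Fin s) k))) *
        (PowerSeries.X ^ d +
          ∑ i : Fin d, PowerSeries.C (a i) * PowerSeries.X ^ (d - 1 - (i : ℕ))) :=
  weierstrass_preparation_polynomial_coefficients_general r s d f hlow hd1
end

section
/- Let k be an algebraically closed field of characteristic zero and let y_i, z_i ∈ k[[u,b,t]] satisfy: y_i = O(uⁿ) and z_i = O(uⁿ) (every monomial of y_i and z_i has u-degree ≥ n), and there are expansions y_i(u,b,t) = y_i(u,0,t) + b²u^{m_i}φ_i(u,b,t), z_i(u,b,t) = z_i(u,0,t) + b·u^{m_i}ψ_i(u,b,t) with φ_i, ψ_i ∈ k[[u,b,t]]. If for indices i ≠ j one has y_i − y_j = u^{k_{ij}}·unit and z_i − z_j = O(u^{k_{ij}}), and m_i ≠ m_j with φ_i(0), ψ_i(0), φ_j(0), ψ_j(0) all nonzero, then k_{ij} ≤ min{m_i, m_j}. -/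
/-! The `b`-linear part of `z_i - z_j` is `b (u^{m_i} ψ_i - u^{m_j} ψ_j)`. If `m_i < m_j`, its
coefficient at `b u^{m_i}` is `ψ_i(0) ≠ 0`, while divisibility of `z_i - z_j` by `u^{k_{ij}}`
kills that coefficient as soon as `k_{ij} > m_i`. -/

/-- Setting `b = 0` in a series of `k[[u,b,t]]` (variables `inl 0 = u`, `inl 1 = b`). -/
noncomputable def setB0 {l : ℕ} {k : Type*} [CommRing k]
    (f : MvPowerSeries (Fin 2 ⊕ Fin l) k) : MvPowerSeries (Fin 2 ⊕ Fin l) k :=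
  fun m => if m (Sum.inl 1) = 0 then MvPowerSeries.coeff m f else 0

open MvPowerSeries

theorem MvPowerSeries.coeff_X_mul_X_pow_mul {σ R : Type*} [CommSemiring R] (i j : σ) (m : ℕ)
    (ψ : MvPowerSeries σ R) :
    coeff (Finsupp.single i 1 + Finsupp.single j m) (X i * X j ^ m * ψ) = constantCoeff ψ := by
  rw [X, X_pow_eq, monomial_mul_monomial, one_mul, coeff_monomial_mul, if_pos le_rfl, tsub_self,
    one_mul, coeff_zero_eq_constantCoeff]

section Wedge

variable {l : ℕ} {R : Type*} [CommRing R]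

theorem coeff_setB0_of_ne_zero (f : MvPowerSeries (Fin 2 ⊕ Fin l) R)
    {e : Fin 2 ⊕ Fin l →₀ ℕ} (he : e (Sum.inl 1) ≠ 0) : coeff e (setB0 f) = 0 := by
  rw [coeff_apply]
  simp [setB0, he]

theorem coeff_eq_of_eq_setB0_add {z ψ : MvPowerSeries (Fin 2 ⊕ Fin l) R} {m : ℕ}
    (hz : z = setB0 z + X (Sum.inl 1) * X (Sum.inl 0) ^ m * ψ) {e : Fin 2 ⊕ Fin l →₀ ℕ}
    (he : e (Sum.inl 1) ≠ 0) :
    coeff e z = coeff e (X (Sum.inl 1) * X (Sum.inl 0) ^ m * ψ) := by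
  conv_lhs => rw [hz]
  rw [map_add, coeff_setB0_of_ne_zero z he, zero_add]

theorem le_of_X_pow_dvd_sub_of_lt {mi mj kij : ℕ}
    {zi zj psii psij : MvPowerSeries (Fin 2 ⊕ Fin l) R}
    (hzi : zi = setB0 zi + X (Sum.inl 1) * X (Sum.inl 0) ^ mi * psii)
    (hzj : zj = setB0 zj + X (Sum.inl 1) * X (Sum.inl 0) ^ mj * psij)
    (hzdiv : X (Sum.inl 0) ^ kij ∣ zi - zj) (hlt : mi < mj) (hpsii : constantCoeff psii ≠ 0) :
    kij ≤ mi := by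
  by_contra! hk
  set e : Fin 2 ⊕ Fin l →₀ ℕ := Finsupp.single (Sum.inl 1) 1 + Finsupp.single (Sum.inl 0) mi
  have he_b : e (Sum.inl 1) = 1 := by simp [e]
  have he_u : e (Sum.inl 0) = mi := by simp [e]
  have hi : coeff e zi = constantCoeff psii := by
    rw [coeff_eq_of_eq_setB0_add hzi (by omega), coeff_X_mul_X_pow_mul]
  have hj : coeff e zj = 0 := by
    rw [coeff_eq_of_eq_setB0_add hzj (by omega)]
    exact X_pow_dvd_iff.mp (Dvd.intro_left _ (mul_right_comm _ _ _)) e (by omega)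
  have hsub : coeff e (zi - zj) = 0 := X_pow_dvd_iff.mp hzdiv e (by omega)
  rw [map_sub, hi, hj, sub_zero] at hsub
  exact hpsii hsub

end Wedge

theorem contact_order_le_min_general {l : ℕ} {k : Type*} [Field k]
    (mi mj kij : ℕ)
    (zi zj psii psij : MvPowerSeries (Fin 2 ⊕ Fin l) k)
    (hzi : zi = setB0 zi + MvPowerSeries.X (Sum.inl 1) *
      MvPowerSeries.X (Sum.inl 0) ^ mi * psii)
    (hzj : zj = setB0 zj + MvPowerSeries.X (Sum.inl 1) *
      MvPowerSeries.X (Sum.inl 0) ^ mj * psij)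
    (hzdiv : MvPowerSeries.X (Sum.inl 0) ^ kij ∣ (zi - zj))
    (hm : mi ≠ mj)
    (hpsii : MvPowerSeries.constantCoeff psii ≠ 0)
    (hpsij : MvPowerSeries.constantCoeff psij ≠ 0) :
    kij ≤ min mi mj := by
  rcases hm.lt_or_gt with hlt | hlt
  · have hki := le_of_X_pow_dvd_sub_of_lt hzi hzj hzdiv hlt hpsii
    exact le_min hki (hki.trans hlt.le)
  · have hzdiv' : X (Sum.inl 0) ^ kij ∣ zj - zi := by
      simpa only [neg_sub] using hzdiv.neg_right
    have hkj := le_of_X_pow_dvd_sub_of_lt hzj hzi hzdiv' hlt hpsij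
    exact le_min (hkj.trans hlt.le) hkj

/-- last claim of Lemma 5.6: for two polar wedge parameterizations
`y_m = y_m(u,0,t) + b²u^{m_m}φ_m`, `z_m = z_m(u,0,t) + b·u^{m_m}ψ_m` (`m = i,j`), all of
order `≥ n` in `u`, with contact `y_i − y_j = u^{k_{ij}}·unit`, `z_i − z_j = O(u^{k_{ij}})`,
if `m_i ≠ m_j` and `φ_i(0), ψ_i(0), φ_j(0), ψ_j(0) ≠ 0` then `k_{ij} ≤ min{m_i, m_j}`. -/
theorem contact_order_le_min {l : ℕ} {k : Type*} [Field k] [CharZero k] [IsAlgClosed k]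
    (n mi mj kij : ℕ) (hn : 1 ≤ n)
    (yi yj zi zj phii psii phij psij : MvPowerSeries (Fin 2 ⊕ Fin l) k)
    (hyin : MvPowerSeries.X (Sum.inl 0) ^ n ∣ yi)
    (hzin : MvPowerSeries.X (Sum.inl 0) ^ n ∣ zi)
    (hyjn : MvPowerSeries.X (Sum.inl 0) ^ n ∣ yj)
    (hzjn : MvPowerSeries.X (Sum.inl 0) ^ n ∣ zj)
    (hyi : yi = setB0 yi + MvPowerSeries.X (Sum.inl 1) ^ 2 *
      MvPowerSeries.X (Sum.inl 0) ^ mi * phii)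
    (hzi : zi = setB0 zi + MvPowerSeries.X (Sum.inl 1) *
      MvPowerSeries.X (Sum.inl 0) ^ mi * psii)
    (hyj : yj = setB0 yj + MvPowerSeries.X (Sum.inl 1) ^ 2 *
      MvPowerSeries.X (Sum.inl 0) ^ mj * phij)
    (hzj : zj = setB0 zj + MvPowerSeries.X (Sum.inl 1) *
      MvPowerSeries.X (Sum.inl 0) ^ mj * psij)
    (hcontact : ∃ v, MvPowerSeries.constantCoeff v ≠ 0 ∧
      yi - yj = MvPowerSeries.X (Sum.inl 0) ^ kij * v)
    (hzdiv : MvPowerSeries.X (Sum.inl 0) ^ kij ∣ (zi - zj))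
    (hm : mi ≠ mj)
    (hphii : MvPowerSeries.constantCoeff phii ≠ 0)
    (hpsii : MvPowerSeries.constantCoeff psii ≠ 0)
    (hphij : MvPowerSeries.constantCoeff phij ≠ 0)
    (hpsij : MvPowerSeries.constantCoeff psij ≠ 0) :
    kij ≤ min mi mj :=
  contact_order_le_min_general mi mj kij zi zj psii psij hzi hzj hzdiv hm hpsii hpsij
end

section
/- Let k be an algebraically closed field of characteristic zero, F ∈ k[[X,Y,Z,b,t]], and suppose components of {F = F'_Z = 0} are parameterized as (u,b,t) ↦ (uⁿ, Y_i(u,b,t), Z_i(u,b,t), b, t) with Y_i, Z_i ∈ k[[u,b,t]]. Differentiating the identities F(uⁿ,Y_i,Z_i,b,t) = 0 and F'_Z(uⁿ,Y_i,Z_i,b,t) = 0 with respect to b and each t_j shows: at any point of the parameterized set where additionally F'_Y = 0, one has F'_b = 0 and F'_{t_j} = 0 for all j; and where also u ≠ 0 one gets F'_X = 0. Hence {F = F'_Z = F'_Y = 0, X ≠ 0} is contained in the locus where all first partial derivatives of F vanish. -/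
/-!
Write `s = (uⁿ, Yᵢ, Zᵢ, b, t)`. Differentiating `F ∘ s = 0` with respect to a source variable `v`
gives `∑ᵢ (∂ᵢF ∘ s) · ∂ᵥsᵢ = 0`, in which the `Y`- and `Z`-terms vanish by hypothesis. Taking
`v = b` or `v = t_j` isolates `∂_b F ∘ s` resp. `∂_{t_j} F ∘ s`, and `v = u` leaves
`(∂_X F ∘ s) · n u^{n-1} = 0`, so `∂_X F ∘ s = 0` because `k[[u, b, t]]` is a domain.

The chain rule for `msubst` is reduced to the one for polynomials: since every `sᵢ` has positive
order, a coefficient of `f ∘ s` of total degree `d` only sees the coefficients of `f` of total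
degree at most `d`, so `f` may be replaced by a truncation.
-/

/-- Formal partial derivative `∂f/∂x_i` of a multivariate power series. -/
noncomputable def pd {σ k : Type*} [CommRing k] (i : σ) (f : MvPowerSeries σ k) :
    MvPowerSeries σ k :=
  fun m => ((m i + 1 : ℕ) : k) * MvPowerSeries.coeff (m + Finsupp.single i 1) f

/-- Substitution of power series (valid when the substituted series have zero constant term). -/
noncomputable def msubst {σ τ k : Type*} [Fintype σ] [DecidableEq σ] [CommRing k]
    (s : σ → MvPowerSeries τ k) (f : MvPowerSeries σ k) : MvPowerSeries τ k :=
  fun α => ∑ m ∈ Finset.Iic (Finsupp.equivFunOnFinite.symm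
      (fun _ : σ => Finsupp.sum α fun _ e => e)),
    MvPowerSeries.coeff m f *
      MvPowerSeries.coeff α (Finsupp.prod m fun i e => s i ^ e)

open MvPowerSeries Finsupp

theorem Derivation.map_aeval_mvPolynomial {σ R A M : Type*} [Fintype σ] [CommSemiring R]
    [CommSemiring A] [Algebra R A] [AddCommMonoid M] [Module A M] [Module R M]
    [IsScalarTower R A M] (D : Derivation R A M) (s : σ → A) (p : MvPolynomial σ R) :
    D (MvPolynomial.aeval s p) =
      ∑ i, MvPolynomial.aeval s (MvPolynomial.pderiv i p) • D (s i) := by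
  classical
  induction p using MvPolynomial.induction_on with
  | C a => simp
  | add p q hp hq => simp [hp, hq, add_smul, Finset.sum_add_distrib]
  | mul_X p i hp =>
    simp [hp, Derivation.leibniz, add_smul, apply_ite (MvPolynomial.aeval s), ite_smul,
      Finset.sum_add_distrib, Finset.smul_sum, mul_smul, Pi.single_apply]

section
variable {σ τ k : Type*} [CommRing k]

theorem pd_eq_pderiv (i : σ) (f : MvPowerSeries σ k) : pd i f = pderiv k i f := by
  ext m
  rw [coeff_pderiv]
  change ((m i + 1 : ℕ) : k) * _ = _
  push_cast
  ring

namespace MvPowerSeries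

theorem degree_le_order_prod_pow {s : σ → MvPowerSeries τ k}
    (hs : ∀ i, constantCoeff (s i) = 0) (m : σ →₀ ℕ) :
    ((degree m : ℕ) : ℕ∞) ≤ order (m.prod fun i e => s i ^ e) := by
  rw [degree_apply, Nat.cast_sum]
  exact (Finset.sum_le_sum fun i _ => le_order_pow_of_constantCoeff_eq_zero _ (hs i)).trans
    (le_order_prod _ _)

theorem coeff_aeval_eq_zero {s : σ → MvPowerSeries τ k}
    (hs : ∀ i, constantCoeff (s i) = 0) {p : MvPolynomial σ k} {α : τ →₀ ℕ}
    (hp : ∀ m, degree m ≤ degree α → p.coeff m = 0) :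
    coeff α (MvPolynomial.aeval s p) = 0 := by
  rw [MvPolynomial.aeval_def, MvPolynomial.eval₂_eq, map_sum]
  refine Finset.sum_eq_zero fun m _ => ?_
  rw [← c_eq_algebraMap, coeff_C_mul]
  rcases le_or_gt (degree m) (degree α) with h | h
  · rw [hp m h, zero_mul]
  · exact mul_eq_zero_of_right _
      (coeff_of_lt_order ((Nat.cast_lt.mpr h).trans_le (degree_le_order_prod_pow hs m)))

theorem natCast_mul_X_pow_ne_zero [CharZero k] {n : ℕ} (hn : n ≠ 0) (i : σ) (m : ℕ) :
    (n : MvPowerSeries σ k) * X i ^ m ≠ 0 := fun h => by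
  have := congrArg (coeff (single i m)) h
  rw [← map_natCast C, X_pow_eq, coeff_C_mul, coeff_monomial_same, mul_one, map_zero,
    Nat.cast_eq_zero] at this
  exact hn this

end MvPowerSeries

variable [Fintype σ] [DecidableEq σ] {s : σ → MvPowerSeries τ k}

theorem coeff_msubst_eq_coeff_aeval (hs : ∀ i, constantCoeff (s i) = 0) (f : MvPowerSeries σ k)
    {p : MvPolynomial σ k} {α : τ →₀ ℕ} (hp : ∀ m, degree m ≤ degree α → p.coeff m = coeff m f) :
    coeff α (msubst s f) = coeff α (MvPolynomial.aeval s p) := by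
  set B : σ →₀ ℕ := equivFunOnFinite.symm fun _ => degree α
  have htrunc : coeff α (msubst s f) =
      coeff α (MvPolynomial.aeval s (truncFinset k (Finset.Iic B) f)) := by
    rw [truncFinset_apply, map_sum, map_sum]
    refine Finset.sum_congr rfl fun m _ => ?_
    rw [MvPolynomial.aeval_monomial, ← c_eq_algebraMap, coeff_C_mul]
  rw [htrunc, ← sub_eq_zero, ← map_sub, ← map_sub]
  refine coeff_aeval_eq_zero hs fun m hm => ?_
  have hmB : m ∈ Finset.Iic B := Finset.mem_Iic.mpr fun i => (le_degree i m).trans hm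
  rw [MvPolynomial.coeff_sub, coeff_truncFinset_of_mem _ hmB, hp m hm, sub_self]

theorem pderiv_msubst (hs : ∀ i, constantCoeff (s i) = 0) (j : τ) (f : MvPowerSeries σ k) :
    pderiv k j (msubst s f) = ∑ i, msubst s (pderiv k i f) * pderiv k j (s i) := by
  classical
  ext α
  set P := truncTotal (degree α + 2) f
  have hP : ∀ m, degree m ≤ degree α + 1 → P.coeff m = coeff m f :=
    fun m hm => coeff_truncTotal _ (by omega)
  have hlhs : coeff α (pderiv k j (msubst s f)) =
      coeff α (pderiv k j (MvPolynomial.aeval s P)) := by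
    rw [coeff_pderiv, coeff_pderiv,
      coeff_msubst_eq_coeff_aeval hs f fun m hm => hP m (by simpa using hm)]
  rw [hlhs, Derivation.map_aeval_mvPolynomial, map_sum, map_sum]
  refine Finset.sum_congr rfl fun i _ => ?_
  rw [smul_eq_mul, coeff_mul, coeff_mul]
  refine Finset.sum_congr rfl fun βγ hβγ => ?_
  have hβ : degree βγ.1 ≤ degree α := by
    rw [← Finset.HasAntidiagonal.mem_antidiagonal.mp hβγ, map_add]
    omega
  congr 1
  refine (coeff_msubst_eq_coeff_aeval hs _ fun m hm => ?_).symm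
  rw [MvPolynomial.coeff_pderiv, MvPowerSeries.coeff_pderiv, hP _ (by simp; omega)]

end

/-- Variables of `F`: `inl 0, inl 1, inl 2, inl 3, inr j` are `X, Y, Z, b, t_j`; in the source of
the parameterization `inl 0, inl 1, inr j` are `u, b, t_j`. -/
theorem singular_locus_containment_general {l : ℕ} {k : Type*} [Field k] [CharZero k]
    (n : ℕ) (hn : 1 ≤ n) (F : MvPowerSeries (Fin 4 ⊕ Fin l) k)
    (Yi Zi : MvPowerSeries (Fin 2 ⊕ Fin l) k)
    (hY0 : MvPowerSeries.constantCoeff Yi = 0)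
    (hZ0 : MvPowerSeries.constantCoeff Zi = 0)
    (hF : msubst (Sum.elim ![MvPowerSeries.X (Sum.inl 0) ^ n, Yi, Zi,
        MvPowerSeries.X (Sum.inl 1)] (fun j => MvPowerSeries.X (Sum.inr j))) F = 0)
    (hFZ : msubst (Sum.elim ![MvPowerSeries.X (Sum.inl 0) ^ n, Yi, Zi,
        MvPowerSeries.X (Sum.inl 1)] (fun j => MvPowerSeries.X (Sum.inr j)))
      (pd (Sum.inl 2) F) = 0)
    (hFY : msubst (Sum.elim ![MvPowerSeries.X (Sum.inl 0) ^ n, Yi, Zi,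
        MvPowerSeries.X (Sum.inl 1)] (fun j => MvPowerSeries.X (Sum.inr j)))
      (pd (Sum.inl 1) F) = 0) :
    msubst (Sum.elim ![MvPowerSeries.X (Sum.inl 0) ^ n, Yi, Zi,
        MvPowerSeries.X (Sum.inl 1)] (fun j => MvPowerSeries.X (Sum.inr j)))
      (pd (Sum.inl 3) F) = 0 ∧
    (∀ j : Fin l, msubst (Sum.elim ![MvPowerSeries.X (Sum.inl 0) ^ n, Yi, Zi,
        MvPowerSeries.X (Sum.inl 1)] (fun j' => MvPowerSeries.X (Sum.inr j')))
      (pd (Sum.inr j) F) = 0) ∧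
    msubst (Sum.elim ![MvPowerSeries.X (Sum.inl 0) ^ n, Yi, Zi,
        MvPowerSeries.X (Sum.inl 1)] (fun j => MvPowerSeries.X (Sum.inr j)))
      (pd (Sum.inl 0) F) = 0 := by
  set s : Fin 4 ⊕ Fin l → MvPowerSeries (Fin 2 ⊕ Fin l) k :=
    Sum.elim ![X (Sum.inl 0) ^ n, Yi, Zi, X (Sum.inl 1)] fun j => X (Sum.inr j)
  have hs : ∀ i, constantCoeff (s i) = 0 := by
    rintro (i | j)
    · fin_cases i <;> simp [s, hY0, hZ0, zero_pow (by omega : n ≠ 0)]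
    · simp [s]
  simp only [pd_eq_pderiv] at hFY hFZ ⊢
  have hchain : ∀ j, msubst s (pderiv k (Sum.inl 0) F) * pderiv k j (X (Sum.inl 0) ^ n) +
      msubst s (pderiv k (Sum.inl 3) F) * pderiv k j (X (Sum.inl 1)) +
      ∑ j', msubst s (pderiv k (Sum.inr j') F) * pderiv k j (X (Sum.inr j')) = 0 := by
    intro j
    have h := pderiv_msubst hs j F
    rw [hF, map_zero, Fintype.sum_sum_type, Fin.sum_univ_four, hFY, hFZ] at h
    simp only [zero_mul, add_zero] at h
    exact h.symm
  refine ⟨by simpa using hchain (Sum.inl 1), fun j => ?_, ?_⟩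
  · classical
    simpa [pderiv_X, Pi.single_apply] using hchain (Sum.inr j)
  · have h := hchain (Sum.inl 0)
    simp only [pderiv_pow, pderiv_X_self, mul_one] at h
    simpa [natCast_mul_X_pow_ne_zero (by omega : n ≠ 0)] using h

/-- computation in the proof of Corollary 5.2: let
`F ∈ k[[X,Y,Z,b,t]]` (variables `inl 0 = X, inl 1 = Y, inl 2 = Z, inl 3 = b`) and let a
component of `{F = F'_Z = 0}` be parameterized by `(u,b,t) ↦ (uⁿ, Y_i, Z_i, b, t)`
(`u = inl 0`, `b = inl 1` in the source).  If along this parameterization also `F'_Y = 0`,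
then `F'_b = 0`, `F'_{t_j} = 0` for all `j`, and `F'_X = 0` along it; hence
`{F = F'_Z = F'_Y = 0, X ≠ 0}` is contained in the singular locus of `F`. -/
theorem singular_locus_containment {l : ℕ} {k : Type*} [Field k] [CharZero k] [IsAlgClosed k]
    (n : ℕ) (hn : 1 ≤ n) (F : MvPowerSeries (Fin 4 ⊕ Fin l) k)
    (Yi Zi : MvPowerSeries (Fin 2 ⊕ Fin l) k)
    (hY0 : MvPowerSeries.constantCoeff Yi = 0)
    (hZ0 : MvPowerSeries.constantCoeff Zi = 0)
    (hF : msubst (Sum.elim ![MvPowerSeries.X (Sum.inl 0) ^ n, Yi, Zi,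
        MvPowerSeries.X (Sum.inl 1)] (fun j => MvPowerSeries.X (Sum.inr j))) F = 0)
    (hFZ : msubst (Sum.elim ![MvPowerSeries.X (Sum.inl 0) ^ n, Yi, Zi,
        MvPowerSeries.X (Sum.inl 1)] (fun j => MvPowerSeries.X (Sum.inr j)))
      (pd (Sum.inl 2) F) = 0)
    (hFY : msubst (Sum.elim ![MvPowerSeries.X (Sum.inl 0) ^ n, Yi, Zi,
        MvPowerSeries.X (Sum.inl 1)] (fun j => MvPowerSeries.X (Sum.inr j)))
      (pd (Sum.inl 1) F) = 0) :
    msubst (Sum.elim ![MvPowerSeries.X (Sum.inl 0) ^ n, Yi, Zi,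
        MvPowerSeries.X (Sum.inl 1)] (fun j => MvPowerSeries.X (Sum.inr j)))
      (pd (Sum.inl 3) F) = 0 ∧
    (∀ j : Fin l, msubst (Sum.elim ![MvPowerSeries.X (Sum.inl 0) ^ n, Yi, Zi,
        MvPowerSeries.X (Sum.inl 1)] (fun j' => MvPowerSeries.X (Sum.inr j')))
      (pd (Sum.inr j) F) = 0) ∧
    msubst (Sum.elim ![MvPowerSeries.X (Sum.inl 0) ^ n, Yi, Zi,
        MvPowerSeries.X (Sum.inl 1)] (fun j => MvPowerSeries.X (Sum.inr j)))
      (pd (Sum.inl 0) F) = 0 :=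
  singular_locus_containment_general n hn F Yi Zi hY0 hZ0 hF hFZ hFY
end
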